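/- arXiv:1208.3213 — 2 statements merged into one kernel-verified Lean document; each statement's English description precedes it below -/
import Mathlib

section
/- There exists an admissible strategy ũ such that for every k ≥ 1, E[ℓ_k(ũ_k) | 𝒴_{0,k}] ≤ ess inf_{u ∈ 𝕌_{0,k}} E[ℓ_k(u) | 𝒴_{0,k}] + 1/k almost surely; moreover, any such strategy ũ is mean optimal, i.e., liminf_{T→∞} (E[L_T(u)] − E[L_T(ũ)]) ≥ 0 for every admissible strategy u. -/
open MeasureTheory Filter Set
open scoped ENNReal Topology symmDiff

noncomputable section

namespace ErgodicDecisions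

variable {Ω U : Type*}

/-- The `ℤ`-indexed iterates of an invertible transformation `T` with inverse `S`:
`iter T S n = Tⁿ` for `n ≥ 0` and `iter T S (-n) = Sⁿ`. -/
def iter (T S : Ω → Ω) : ℤ → Ω → Ω
  | Int.ofNat n => T^[n]
  | Int.negSucc n => S^[n + 1]

variable {m0 : MeasurableSpace Ω} [mU : MeasurableSpace U]

/-- The observation σ-field `𝒴_{m,n} = ⋁_{k=m}^{n} T^{-k} 𝒴`. -/
def obsField (T S : Ω → Ω) (Y : MeasurableSpace Ω) (m n : ℤ) : MeasurableSpace Ω :=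
  ⨆ k ∈ Set.Icc m n, MeasurableSpace.comap (iter T S k) Y

/-- The observation σ-field `𝒴_{-∞,n} = ⋁_{k ≤ n} T^{-k} 𝒴`. -/
def obsFieldLE (T S : Ω → Ω) (Y : MeasurableSpace Ω) (n : ℤ) : MeasurableSpace Ω :=
  ⨆ k ∈ Set.Iic n, MeasurableSpace.comap (iter T S k) Y

/-- `𝕌_{m,n}`: the set of `𝒴_{m,n}`-measurable decision maps `Ω → U`. -/
def Umn (T S : Ω → Ω) (Y : MeasurableSpace Ω) (m n : ℤ) : Set (Ω → U) :=
  {v | Measurable[obsField T S Y m n] v}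

/-- `𝕌_n = ⋃_{m ≤ n} 𝕌_{m,n}`. -/
def Un (T S : Ω → Ω) (Y : MeasurableSpace Ω) (n : ℤ) : Set (Ω → U) :=
  ⋃ m ∈ Set.Iic n, Umn T S Y m n

/-- The loss at time `n` of the decision map `v`: `ℓ_n(v)(ω) = ℓ(v(ω), Tⁿω)`. -/
def lossAt (T S : Ω → Ω) (ℓ : U → Ω → ℝ) (n : ℤ) (v : Ω → U) (ω : Ω) : ℝ :=
  ℓ (v ω) (iter T S n ω)

/-- An admissible strategy: `u_k` is `𝒴_{0,k}`-measurable for every `k ≥ 1`. -/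
def Admissible (T S : Ω → Ω) (Y : MeasurableSpace Ω) (u : ℕ → Ω → U) : Prop :=
  ∀ k : ℕ, 1 ≤ k → u k ∈ Umn T S Y 0 (k : ℤ)

/-- The time-average loss `L_T(u) = T⁻¹ ∑_{k=1}^T ℓ_k(u_k)`. -/
def avgLoss (T S : Ω → Ω) (ℓ : U → Ω → ℝ) (u : ℕ → Ω → U) (n : ℕ) (ω : Ω) : ℝ :=
  (n : ℝ)⁻¹ * ∑ k ∈ Finset.Icc 1 n, lossAt T S ℓ (k : ℤ) (u k) ω

/-- `g` is an essential infimum (an a.e.-greatest lower bound among random variables)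
of the family `(f i)_{i ∈ S₀}` under `P`. -/
def IsEssInfFam {ι : Type*} (P : Measure Ω) (S₀ : Set ι) (f : ι → Ω → ℝ) (g : Ω → ℝ) : Prop :=
  Measurable[m0] g ∧ (∀ i ∈ S₀, ∀ᵐ ω ∂P, g ω ≤ f i ω) ∧
    ∀ h : Ω → ℝ, Measurable[m0] h → (∀ i ∈ S₀, ∀ᵐ ω ∂P, h ω ≤ f i ω) → ∀ᵐ ω ∂P, h ω ≤ g ω

/-- `g` is an essential supremum (an a.e.-least upper bound among random variables)
of the family `(f i)_{i ∈ S₀}` under `P`. -/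
def IsEssSupFam {ι : Type*} (P : Measure Ω) (S₀ : Set ι) (f : ι → Ω → ℝ) (g : Ω → ℝ) : Prop :=
  Measurable[m0] g ∧ (∀ i ∈ S₀, ∀ᵐ ω ∂P, f i ω ≤ g ω) ∧
    ∀ h : Ω → ℝ, Measurable[m0] h → (∀ i ∈ S₀, ∀ᵐ ω ∂P, f i ω ≤ h ω) → ∀ᵐ ω ∂P, g ω ≤ h ω

/-- A mean-optimal strategy in the sense of Lemma 2.5 of the paper:
`E[ℓ_k(ũ_k)|𝒴_{0,k}] ≤ ess inf_{u ∈ 𝕌_{0,k}} E[ℓ_k(u)|𝒴_{0,k}] + 1/k` a.s. for all `k ≥ 1`. -/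
def MeanOptimalStrategy (P : Measure Ω) (T S : Ω → Ω) (Y : MeasurableSpace Ω)
    (ℓ : U → Ω → ℝ) (ut : ℕ → Ω → U) : Prop :=
  Admissible T S Y ut ∧
    ∀ k : ℕ, 1 ≤ k → ∃ g : Ω → ℝ,
      IsEssInfFam P (Umn T S Y 0 (k : ℤ))
        (fun v => P[lossAt T S ℓ (k : ℤ) v | obsField T S Y 0 (k : ℤ)]) g ∧
      ∀ᵐ ω ∂P, (P[lossAt T S ℓ (k : ℤ) (ut k) | obsField T S Y 0 (k : ℤ)]) ω ≤ g ω + (k : ℝ)⁻¹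

/-- Pathwise optimality (Definition 2.2). -/
def PathwiseOptimal (P : Measure Ω) (T S : Ω → Ω) (Y : MeasurableSpace Ω)
    (ℓ : U → Ω → ℝ) (us : ℕ → Ω → U) : Prop :=
  Admissible T S Y us ∧
    ∀ u : ℕ → Ω → U, Admissible T S Y u →
      ∀ᵐ ω ∂P,
        0 ≤ Filter.liminf (fun n : ℕ => avgLoss T S ℓ u n ω - avgLoss T S ℓ us n ω) atTop

/-- Weak pathwise optimality (Definition 2.3). -/
def WeaklyPathwiseOptimal (P : Measure Ω) (T S : Ω → Ω) (Y : MeasurableSpace Ω)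
    (ℓ : U → Ω → ℝ) (us : ℕ → Ω → U) : Prop :=
  Admissible T S Y us ∧
    ∀ u : ℕ → Ω → U, Admissible T S Y u → ∀ ε : ℝ, 0 < ε →
      Tendsto (fun n : ℕ => P {ω | -ε ≤ avgLoss T S ℓ u n ω - avgLoss T S ℓ us n ω})
        atTop (𝓝 1)

/-- Mean optimality (Definition 2.4). -/
def MeanOptimal (P : Measure Ω) (T S : Ω → Ω) (Y : MeasurableSpace Ω)
    (ℓ : U → Ω → ℝ) (us : ℕ → Ω → U) : Prop :=
  Admissible T S Y us ∧
    ∀ u : ℕ → Ω → U, Admissible T S Y u →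
      0 ≤ Filter.liminf
        (fun n : ℕ => (∫ ω, avgLoss T S ℓ u n ω ∂P) - ∫ ω, avgLoss T S ℓ us n ω ∂P) atTop

/-- Two σ-fields on `Ω` agree modulo `P`-null sets. -/
def EqModP (P : Measure Ω) (m₁ m₂ : MeasurableSpace Ω) : Prop :=
  (∀ A : Set Ω, MeasurableSet[m₁] A → ∃ B : Set Ω, MeasurableSet[m₂] B ∧ P (A ∆ B) = 0) ∧
    ∀ A : Set Ω, MeasurableSet[m₂] A → ∃ B : Set Ω, MeasurableSet[m₁] B ∧ P (A ∆ B) = 0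

/-- Conditional K-automorphism relative to `Z` (Definition 1.4); `S` is the inverse of `T`,
so that `T^{-k}𝒳 = comap T^k 𝒳` and `T^{k}𝒳 = comap S^k 𝒳`. -/
def CondK (P : Measure Ω) (T S : Ω → Ω) (Z : MeasurableSpace Ω) : Prop :=
  ∃ X : MeasurableSpace Ω, X ≤ m0 ∧
    X ≤ MeasurableSpace.comap T X ∧
    EqModP P (⨆ k : ℕ, MeasurableSpace.comap (T^[k + 1]) X) m0 ∧
    EqModP P (⨅ k : ℕ, Z ⊔ MeasurableSpace.comap (S^[k + 1]) X) Z

/-- Conditional weak mixing relative to `Z` (Definition 1.3); `S` is the inverse of `T`,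
so that `T^k B = (S^[k])⁻¹ B`. -/
def CondWeakMixing (P : Measure Ω) (S : Ω → Ω) (Z : MeasurableSpace Ω) : Prop :=
  ∀ A B : Set Ω, MeasurableSet[m0] A → MeasurableSet[m0] B →
    Tendsto
      (fun n : ℕ => ∫ ω,
        (n : ℝ)⁻¹ * ∑ k ∈ Finset.Icc 1 n,
          |(P[(A ∩ S^[k] ⁻¹' B).indicator (fun _ => (1 : ℝ)) | Z]) ω -
            (P[A.indicator (fun _ => (1 : ℝ)) | Z]) ω *
              (P[(S^[k] ⁻¹' B).indicator (fun _ => (1 : ℝ)) | Z]) ω| ∂P)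
      atTop (𝓝 0)

/-- The tail σ-field `⋂_{k≥1} (𝒴_{-∞,0} ∨ T^k 𝒳)`. -/
def tailField (T S : Ω → Ω) (Y X : MeasurableSpace Ω) : MeasurableSpace Ω :=
  ⨅ k : ℕ, obsFieldLE T S Y 0 ⊔ MeasurableSpace.comap (S^[k + 1]) X

/-- The truncated loss `ℓ_0(v)·1_{Λ ≤ M}`. -/
def truncLoss (ℓ : U → Ω → ℝ) (Λ : Ω → ℝ) (M : ℝ) (v : Ω → U) (ω : Ω) : ℝ :=
  if Λ ω ≤ M then ℓ (v ω) ω else 0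

/-- `ℓ̄_0^M(v) = ℓ_0(v)·1_{Λ≤M} − E[ℓ_0(v)·1_{Λ≤M} | 𝒴_{-∞,0}]`. -/
def barLoss (P : Measure Ω) (T S : Ω → Ω) (Y : MeasurableSpace Ω)
    (ℓ : U → Ω → ℝ) (Λ : Ω → ℝ) (M : ℝ) (v : Ω → U) (ω : Ω) : ℝ :=
  truncLoss ℓ Λ M v ω - (P[truncLoss ℓ Λ M v | obsFieldLE T S Y 0]) ω

/-- The uniform conditional mixing assumption of Theorem 2.12:
`lim_{M→∞} limsup_{T→∞} E[(1/T)∑_{k=1}^T ess sup_{u,u'∈𝕌₀}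
|E[(ℓ̄₀^M(u)∘T^{-k})·ℓ̄₀^M(u')|𝒴_{-∞,0}]|] = 0`. -/
def UniformCondMixing (P : Measure Ω) (T S : Ω → Ω) (Y : MeasurableSpace Ω)
    (ℓ : U → Ω → ℝ) (Λ : Ω → ℝ) : Prop :=
  ∃ G : ℝ → ℕ → Ω → ℝ,
    (∀ (M : ℝ) (k : ℕ),
      IsEssSupFam P ((Un T S Y 0) ×ˢ (Un T S Y 0))
        (fun p ω =>
          |(P[(fun ω' => barLoss P T S Y ℓ Λ M p.1 (S^[k] ω') *
                barLoss P T S Y ℓ Λ M p.2 ω') | obsFieldLE T S Y 0]) ω|)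
        (G M k)) ∧
    Tendsto
      (fun M : ℝ =>
        Filter.limsup
          (fun n : ℕ => ∫ ω, (n : ℝ)⁻¹ * ∑ k ∈ Finset.Icc 1 n, G M k ω ∂P) atTop)
      atTop (𝓝 0)

/-- Equimeasurability of the loss (Definition 3.1): for every `ε > 0` there is a set of
probability at least `1-ε` on which the family `{ℓ(u,·) : u ∈ U}` is totally bounded
in `L^∞(P)`. -/
def Equimeasurable (P : Measure Ω) (ℓ : U → Ω → ℝ) : Prop :=
  ∀ ε : ℝ, 0 < ε → ∃ Ωε : Set Ω, MeasurableSet[m0] Ωε ∧ 1 - ENNReal.ofReal ε ≤ P Ωε ∧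
    ∀ δ : ℝ, 0 < δ → ∃ 𝒩 : Finset (Ω → ℝ), ∀ u : U, ∃ f ∈ 𝒩,
      eLpNorm (fun ω => Ωε.indicator (ℓ u) ω - f ω) ⊤ P ≤ ENNReal.ofReal δ

/-!
For each `k` the family `E[ℓ_k(v) | 𝒴_{0,k}]`, `v ∈ 𝕌_{0,k}`, is directed downward (glue two
decisions along the `𝒴_{0,k}`-measurable set where the first one is better) and dominated by
`E[Λ ∘ Tᵏ | 𝒴_{0,k}]`. Minimising the expectation over the family then produces a decreasing
sequence of members whose pointwise limit is the essential infimum, and taking on each `ω` the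
first member within `1/k` of the limit gives `ũ_k`. Integrating,
`E ℓ_k(ũ_k) ≤ E ℓ_k(u_k) + 1/k` for every admissible `u`, and the Cesàro means of `1/k` vanish.
-/

end ErgodicDecisions

namespace ErgodicDecisions

variable {Ω U : Type*} {m Y m0 : MeasurableSpace Ω}

section EssInf

variable {ι : Type*} {P : Measure Ω} {S₀ : Set ι} {F : ι → Ω → ℝ}

theorem exists_seq_antitone_of_directed
    (hdir : ∀ i ∈ S₀, ∀ j ∈ S₀, ∃ k ∈ S₀, F k ≤ᵐ[P] F i ∧ F k ≤ᵐ[P] F j)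
    {v : ℕ → ι} (hv : ∀ n, v n ∈ S₀) :
    ∃ w : ℕ → ι, (∀ n, w n ∈ S₀) ∧ (∀ n, F (w (n + 1)) ≤ᵐ[P] F (w n)) ∧
      ∀ n, F (w n) ≤ᵐ[P] F (v n) := by
  choose k hkS hki hkj using hdir
  let w : ℕ → S₀ := fun n =>
    Nat.rec ⟨v 0, hv 0⟩ (fun n x => ⟨k x.1 x.2 (v (n + 1)) (hv _), hkS _ _ _ _⟩) n
  refine ⟨fun n => (w n).1, fun n => (w n).2, fun n => hki (w n).1 (w n).2 (v (n + 1)) (hv _), ?_⟩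
  rintro (_ | n)
  · exact EventuallyLE.rfl
  · exact hkj _ _ _ _

theorem ae_le_of_integral_le_integral_min {g h : Ω → ℝ} (hg : Integrable g P)
    (hh : Integrable h P) (hle : ∫ ω, g ω ∂P ≤ ∫ ω, min (g ω) (h ω) ∂P) : g ≤ᵐ[P] h := by
  have hgap : 0 ≤ᵐ[P] fun ω => g ω - min (g ω) (h ω) :=
    ae_of_all _ fun ω => sub_nonneg.2 (min_le_left _ _)
  have hmin_int : Integrable (fun ω => min (g ω) (h ω)) P := hg.inf hh
  have hzero : ∫ ω, g ω - min (g ω) (h ω) ∂P = 0 := by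
    have := integral_nonneg_of_ae hgap
    rw [integral_sub hg hmin_int] at this ⊢
    linarith
  filter_upwards [(integral_eq_zero_iff_of_nonneg_ae hgap (hg.sub hmin_int)).1 hzero] with ω hω
  have : min (g ω) (h ω) = g ω := by linarith [show g ω - min (g ω) (h ω) = 0 from hω]
  exact this ▸ min_le_right _ _

theorem isEssInfFam_iInf_of_integral_le {B : Ω → ℝ} (hmeas : ∀ i ∈ S₀, Measurable (F i))
    (hB : Integrable B P) (hbound : ∀ i ∈ S₀, ∀ᵐ ω ∂P, |F i ω| ≤ B ω)
    (hdir : ∀ i ∈ S₀, ∀ j ∈ S₀, ∃ k ∈ S₀, F k ≤ᵐ[P] F i ∧ F k ≤ᵐ[P] F j)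
    {w : ℕ → ι} (hw : ∀ n, w n ∈ S₀) (hg_int : Integrable (fun ω => ⨅ n, F (w n) ω) P)
    (hconv : ∀ᵐ ω ∂P, Tendsto (fun n => F (w n) ω) atTop (𝓝 (⨅ n, F (w n) ω)))
    (hle : ∀ i ∈ S₀, ∫ ω, ⨅ n, F (w n) ω ∂P ≤ ∫ ω, F i ω ∂P) :
    IsEssInfFam P S₀ F (fun ω => ⨅ n, F (w n) ω) := by
  have hint : ∀ i ∈ S₀, Integrable (F i) P := fun i hi =>
    hB.mono' (hmeas i hi).aestronglyMeasurable (by simpa only [Real.norm_eq_abs] using hbound i hi)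
  refine ⟨Measurable.iInf fun n => hmeas _ (hw n), fun i hi => ?_, fun h _ hh => ?_⟩
  · refine ae_le_of_integral_le_integral_min hg_int (hint i hi) ?_
    -- `∫ min (F (w n)) (F i)` dominates the integral of a member of the family below both.
    refine ge_of_tendsto' (tendsto_integral_of_dominated_convergence B
      (fun n => ((hmeas _ (hw n)).min (hmeas i hi)).aestronglyMeasurable) hB
      (fun n => ?_) (hconv.mono fun ω hω => hω.min tendsto_const_nhds)) fun n => ?_
    · filter_upwards [ae_all_iff.2 fun n => hbound _ (hw n), hbound i hi] with ω hωw hωi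
      exact abs_min_le_max_abs_abs.trans (max_le (hωw n) hωi)
    · obtain ⟨k, hk, hkw, hki⟩ := hdir _ (hw n) i hi
      refine (hle k hk).trans (integral_mono_ae (hint k hk) ((hint _ (hw n)).inf (hint i hi)) ?_)
      filter_upwards [hkw, hki] with ω h₁ h₂ using le_min h₁ h₂
  · filter_upwards [ae_all_iff.2 fun n => hh (w n) (hw n)] with ω hω using le_ciInf hω

theorem exists_isEssInfFam_iInf {B : Ω → ℝ} (hne : S₀.Nonempty)
    (hmeas : ∀ i ∈ S₀, Measurable (F i)) (hB : Integrable B P)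
    (hbound : ∀ i ∈ S₀, ∀ᵐ ω ∂P, |F i ω| ≤ B ω)
    (hdir : ∀ i ∈ S₀, ∀ j ∈ S₀, ∃ k ∈ S₀, F k ≤ᵐ[P] F i ∧ F k ≤ᵐ[P] F j) :
    ∃ w : ℕ → ι, (∀ n, w n ∈ S₀) ∧ IsEssInfFam P S₀ F (fun ω => ⨅ n, F (w n) ω) := by
  have hint : ∀ i ∈ S₀, Integrable (F i) P := fun i hi =>
    hB.mono' (hmeas i hi).aestronglyMeasurable (by simpa only [Real.norm_eq_abs] using hbound i hi)
  have : Nonempty S₀ := hne.to_subtype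
  set α := ⨅ i : S₀, ∫ ω, F i ω ∂P
  have hα_le : ∀ i ∈ S₀, α ≤ ∫ ω, F i ω ∂P := by
    refine fun i hi => ciInf_le (f := fun i : S₀ => ∫ ω, F i ω ∂P) ⟨-∫ ω, B ω ∂P, ?_⟩ ⟨i, hi⟩
    rintro _ ⟨⟨j, hj⟩, rfl⟩
    rw [← integral_neg]
    exact integral_mono_ae hB.neg (hint j hj) <| by
      filter_upwards [hbound j hj] with ω hω using neg_le_of_abs_le hω
  have happrox : ∀ n : ℕ, ∃ i ∈ S₀, ∫ ω, F i ω ∂P < α + 1 / ((n : ℝ) + 1) := fun n => by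
    obtain ⟨⟨i, hi⟩, hlt⟩ := exists_lt_of_ciInf_lt (lt_add_of_pos_right α Nat.one_div_pos_of_nat)
    exact ⟨i, hi, hlt⟩
  choose v hv hv_lt using happrox
  obtain ⟨w, hw, hanti, hwv⟩ := exists_seq_antitone_of_directed hdir hv
  set g : Ω → ℝ := fun ω => ⨅ n, F (w n) ω
  have hbd : ∀ᵐ ω ∂P, ∀ n, |F (w n) ω| ≤ B ω := ae_all_iff.2 fun n => hbound _ (hw n)
  have hlim : ∀ᵐ ω ∂P, Antitone (fun n => F (w n) ω) ∧
      Tendsto (fun n => F (w n) ω) atTop (𝓝 (g ω)) := by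
    filter_upwards [ae_all_iff.2 hanti, hbd] with ω hω hωB
    exact ⟨antitone_nat_of_succ_le hω, tendsto_atTop_ciInf (antitone_nat_of_succ_le hω)
      ⟨-B ω, by rintro _ ⟨n, rfl⟩; exact neg_le_of_abs_le (hωB n)⟩⟩
  have hg_int : Integrable g P := by
    refine hB.mono' (Measurable.iInf fun n => hmeas _ (hw n)).aestronglyMeasurable ?_
    filter_upwards [hlim, hbd] with ω hω hωB
    exact le_of_tendsto' (continuous_norm.tendsto _ |>.comp hω.2) hωB
  refine ⟨w, hw, isEssInfFam_iInf_of_integral_le hmeas hB hbound hdir hw hg_int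
    (hlim.mono fun ω hω => hω.2) fun i hi => le_trans ?_ (hα_le i hi)⟩
  have hα : Tendsto (fun n : ℕ => α + 1 / ((n : ℝ) + 1)) atTop (𝓝 α) := by
    simpa using (tendsto_const_nhds (x := α)).add tendsto_one_div_add_atTop_nhds_zero_nat
  refine ge_of_tendsto' hα fun n => (integral_mono_ae hg_int (hint _ (hv n)) ?_).trans (hv_lt n).le
  filter_upwards [hlim, hwv n] with ω hω hωv using (hω.1.le_of_tendsto hω.2 n).trans hωv

end EssInf

section CondExp

variable {P : Measure Ω}

theorem abs_condExp_ae_le_condExp_of_abs_le {f B : Ω → ℝ} (hf : Integrable f P)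
    (hB : Integrable B P) (hfB : ∀ᵐ ω ∂P, |f ω| ≤ B ω) : |P[f | m]| ≤ᵐ[P] P[B | m] :=
  (abs_condExp_ae_le_condExp_abs f).trans (condExp_mono hf.abs hB hfB)

theorem condExp_piecewise {f g : Ω → ℝ} {s : Set Ω} [DecidablePred (· ∈ s)]
    (hf : Integrable f P) (hg : Integrable g P) (hs : MeasurableSet[m] s) :
    P[s.piecewise f g | m] =ᵐ[P] s.piecewise (P[f | m]) (P[g | m]) := by
  by_cases hm : m ≤ m0
  · rw [← s.indicator_add_compl_eq_piecewise, ← s.indicator_add_compl_eq_piecewise]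
    filter_upwards [condExp_add (hf.indicator (hm s hs)) (hg.indicator (hm _ hs.compl)) m,
      condExp_indicator hf hs, condExp_indicator hg hs.compl] with ω h₁ h₂ h₃
    rw [h₁, Pi.add_apply, Pi.add_apply, h₂, h₃]
  · simp_rw [condExp_of_not_le hm, Set.piecewise_same]
    rfl

theorem condExp_select_ae_eq {G : ℕ → Ω → ℝ} {N : Ω → ℕ} (hN : Measurable[m] N)
    (hG : ∀ n, Integrable (G n) P) (hGN : Integrable (fun ω => G (N ω) ω) P) :
    ∀ᵐ ω ∂P, P[fun ω => G (N ω) ω | m] ω = P[G (N ω) | m] ω := by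
  have hlevel : ∀ n, ∀ᵐ ω ∂P, N ω = n → P[fun ω => G (N ω) ω | m] ω = P[G n | m] ω := by
    intro n
    have hs : MeasurableSet[m] (N ⁻¹' {n}) := hN (measurableSet_singleton n)
    have heq : (N ⁻¹' {n}).indicator (fun ω => G (N ω) ω) = (N ⁻¹' {n}).indicator (G n) :=
      Set.indicator_congr fun ω (hω : N ω = n) => by rw [hω]
    filter_upwards [condExp_indicator hGN hs, condExp_indicator (hG n) hs] with ω h₁ h₂ hω
    have hω' : ω ∈ N ⁻¹' {n} := hω
    rw [heq, Set.indicator_of_mem hω'] at h₁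
    rw [Set.indicator_of_mem hω'] at h₂
    rw [← h₁, h₂]
  filter_upwards [ae_all_iff.2 hlevel] with ω hω using hω _ rfl

end CondExp

section Decisions

variable [MeasurableSpace U] {P : Measure Ω} {f : U → Ω → ℝ} {Λ : Ω → ℝ}

theorem integrable_comp_decision (hf : Measurable fun p : U × Ω => f p.1 p.2)
    (hΛ : Integrable Λ P) (hdom : ∀ u ω, |f u ω| ≤ Λ ω) {v : Ω → U} (hv : Measurable v) :
    Integrable (fun ω => f (v ω) ω) P :=
  hΛ.mono' (hf.comp (hv.prodMk measurable_id)).aestronglyMeasurable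
    (ae_of_all _ fun ω => hdom (v ω) ω)

variable (hm : m ≤ m0) (hf : Measurable fun p : U × Ω => f p.1 p.2) (hΛ : Integrable Λ P)
  (hdom : ∀ u ω, |f u ω| ≤ Λ ω)
include hm hf hΛ hdom

theorem abs_condExp_comp_decision_le {v : Ω → U} (hv : Measurable[m] v) :
    |P[fun ω => f (v ω) ω | m]| ≤ᵐ[P] P[Λ | m] :=
  abs_condExp_ae_le_condExp_of_abs_le (integrable_comp_decision hf hΛ hdom (hv.mono hm le_rfl))
    hΛ (ae_of_all _ fun ω => hdom (v ω) ω)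

theorem exists_condExp_comp_decision_le_min {v v' : Ω → U} (hv : Measurable[m] v)
    (hv' : Measurable[m] v') :
    ∃ w : Ω → U, Measurable[m] w ∧
      P[fun ω => f (w ω) ω | m] ≤ᵐ[P] P[fun ω => f (v ω) ω | m] ∧
      P[fun ω => f (w ω) ω | m] ≤ᵐ[P] P[fun ω => f (v' ω) ω | m] := by
  classical
  set s := {ω | P[fun ω => f (v ω) ω | m] ω ≤ P[fun ω => f (v' ω) ω | m] ω}
  have hs : MeasurableSet[m] s :=
    measurableSet_le stronglyMeasurable_condExp.measurable stronglyMeasurable_condExp.measurable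
  have hloss : (fun ω => f (s.piecewise v v' ω) ω) =
      s.piecewise (fun ω => f (v ω) ω) (fun ω => f (v' ω) ω) := by
    funext ω
    by_cases hω : ω ∈ s <;> simp [Set.piecewise, hω]
  have hpw := condExp_piecewise (m := m) (integrable_comp_decision hf hΛ hdom (hv.mono hm le_rfl))
    (integrable_comp_decision hf hΛ hdom (hv'.mono hm le_rfl)) hs
  rw [← hloss] at hpw
  have hpw_min : ∀ ω, s.piecewise (P[fun ω => f (v ω) ω | m]) (P[fun ω => f (v' ω) ω | m]) ω =
      min (P[fun ω => f (v ω) ω | m] ω) (P[fun ω => f (v' ω) ω | m] ω) := fun ω => by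
    by_cases hωs : ω ∈ s
    · rw [Set.piecewise_eq_of_mem _ _ _ hωs, min_eq_left hωs]
    · rw [Set.piecewise_eq_of_notMem _ _ _ hωs, min_eq_right (not_le.1 hωs).le]
  refine ⟨s.piecewise v v', hv.piecewise hs hv', ?_, ?_⟩
  · filter_upwards [hpw] with ω hω using by rw [hω, hpw_min]; exact min_le_left _ _
  · filter_upwards [hpw] with ω hω using by rw [hω, hpw_min]; exact min_le_right _ _

theorem exists_isEssInfFam_and_condExp_le_add [Nonempty U] {ε : ℝ} (hε : 0 < ε) :
    ∃ (g : Ω → ℝ) (ut : Ω → U), Measurable[m] ut ∧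
      IsEssInfFam P {v : Ω → U | Measurable[m] v} (fun v => P[fun ω => f (v ω) ω | m]) g ∧
      ∀ᵐ ω ∂P, P[fun ω => f (ut ω) ω | m] ω ≤ g ω + ε := by
  classical
  have hmeas : ∀ v : Ω → U, Measurable[m] P[fun ω => f (v ω) ω | m] := fun v =>
    stronglyMeasurable_condExp.measurable
  obtain ⟨w, hw, hg⟩ := exists_isEssInfFam_iInf (P := P) (S₀ := {v : Ω → U | Measurable[m] v})
    (F := fun v => P[fun ω => f (v ω) ω | m]) ⟨fun _ => Classical.arbitrary U, measurable_const⟩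
    (fun v _ => (hmeas v).mono hm le_rfl) integrable_condExp
    (fun v hv => abs_condExp_comp_decision_le hm hf hΛ hdom hv)
    (fun v hv v' hv' => exists_condExp_comp_decision_le_min hm hf hΛ hdom hv hv')
  set g : Ω → ℝ := fun ω => ⨅ n, P[fun ω => f (w n ω) ω | m] ω
  have hfirst : ∀ ω, ∃ n, P[fun ω => f (w n ω) ω | m] ω < g ω + ε := fun ω =>
    exists_lt_of_ciInf_lt (lt_add_of_pos_right _ hε)
  have hsets : ∀ n, MeasurableSet[m] {ω | P[fun ω => f (w n ω) ω | m] ω < g ω + ε} := fun n =>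
    measurableSet_lt (hmeas _) ((Measurable.iInf fun n => hmeas (w n)).add_const ε)
  set N : Ω → ℕ := fun ω => Nat.find (hfirst ω)
  have hN : Measurable[m] N := measurable_find hfirst hsets
  have hut : Measurable[m] fun ω => w (N ω) ω := Measurable.find hw hsets hfirst
  refine ⟨g, fun ω => w (N ω) ω, hut, hg, ?_⟩
  filter_upwards [condExp_select_ae_eq (G := fun n ω => f (w n ω) ω) hN
    (fun n => integrable_comp_decision hf hΛ hdom ((hw n).mono hm le_rfl))
    (integrable_comp_decision hf hΛ hdom (hut.mono hm le_rfl))] with ω hω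
  exact hω ▸ (Nat.find_spec (hfirst ω)).le

theorem integral_comp_decision_le_add [IsProbabilityMeasure P] {g : Ω → ℝ}
    (hg : IsEssInfFam P {v : Ω → U | Measurable[m] v} (fun v => P[fun ω => f (v ω) ω | m]) g)
    {ut v : Ω → U} (hv : Measurable[m] v) {ε : ℝ}
    (hsel : ∀ᵐ ω ∂P, P[fun ω => f (ut ω) ω | m] ω ≤ g ω + ε) :
    ∫ ω, f (ut ω) ω ∂P ≤ ∫ ω, f (v ω) ω ∂P + ε := by
  obtain ⟨hg_meas, hg_le, hg_greatest⟩ := hg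
  have hg_int : Integrable g P := by
    refine integrable_of_le_of_le hg_meas.aestronglyMeasurable
      (hg_greatest (-P[Λ | m]) (stronglyMeasurable_condExp.measurable.mono hm le_rfl).neg
        fun w hw => ?_)
      (hg_le v hv) integrable_condExp.neg integrable_condExp
    filter_upwards [abs_condExp_comp_decision_le hm hf hΛ hdom hw] with ω hω
    exact neg_le_of_abs_le hω
  calc ∫ ω, f (ut ω) ω ∂P = ∫ ω, P[fun ω => f (ut ω) ω | m] ω ∂P := (integral_condExp hm).symm
    _ ≤ ∫ ω, g ω + ε ∂P :=
      integral_mono_ae integrable_condExp (hg_int.add (integrable_const ε)) hsel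
    _ = ∫ ω, g ω ∂P + ε := by simp [integral_add hg_int (integrable_const ε)]
    _ ≤ ∫ ω, P[fun ω => f (v ω) ω | m] ω ∂P + ε :=
      add_le_add_left (integral_mono_ae hg_int integrable_condExp (hg_le v hv)) ε
    _ = ∫ ω, f (v ω) ω ∂P + ε := by rw [integral_condExp hm]

end Decisions

theorem liminf_avg_nonneg_of_neg_inv_le {d : ℕ → ℝ} {C : ℝ}
    (hd : ∀ k : ℕ, 1 ≤ k → -(k : ℝ)⁻¹ ≤ d k) (hC : ∀ k : ℕ, 1 ≤ k → d k ≤ C) :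
    0 ≤ liminf (fun n : ℕ => (n : ℝ)⁻¹ * ∑ k ∈ Finset.Icc 1 n, d k) atTop := by
  have hharm : Tendsto (fun n : ℕ => (n : ℝ)⁻¹ * ∑ k ∈ Finset.Icc 1 n, (k : ℝ)⁻¹) atTop (𝓝 0) := by
    refine tendsto_one_div_add_atTop_nhds_zero_nat.cesaro.congr fun n => ?_
    rw [← Finset.Ico_add_one_right_eq_Icc, Finset.sum_Ico_eq_sum_range]
    simp [add_comm]
  have hlower : ∀ n : ℕ, -((n : ℝ)⁻¹ * ∑ k ∈ Finset.Icc 1 n, (k : ℝ)⁻¹) ≤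
      (n : ℝ)⁻¹ * ∑ k ∈ Finset.Icc 1 n, d k := fun n => by
    rw [← mul_neg, ← Finset.sum_neg_distrib]
    gcongr with k hk
    exact hd k (Finset.mem_Icc.1 hk).1
  have hupper : ∀ᶠ n : ℕ in atTop, (n : ℝ)⁻¹ * ∑ k ∈ Finset.Icc 1 n, d k ≤ C := by
    filter_upwards [eventually_ge_atTop 1] with n hn
    calc (n : ℝ)⁻¹ * ∑ k ∈ Finset.Icc 1 n, d k ≤ (n : ℝ)⁻¹ * ∑ _k ∈ Finset.Icc 1 n, C := by
          gcongr with k hk; exact hC k (Finset.mem_Icc.1 hk).1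
      _ = C := by simp [field]
  rw [← neg_zero, ← hharm.neg.liminf_eq]
  exact liminf_le_liminf (Eventually.of_forall hlower) hharm.neg.isBoundedUnder_ge
    (isCoboundedUnder_ge_of_eventually_le atTop hupper)

section Dynamics

variable {P : Measure Ω} {T S : Ω → Ω}

theorem measurePreserving_iter (hT : MeasurePreserving T P P) (hS : MeasurePreserving S P P) :
    ∀ k : ℤ, MeasurePreserving (iter T S k) P P
  | Int.ofNat n => hT.iterate n
  | Int.negSucc n => hS.iterate (n + 1)

theorem obsField_le (hiter : ∀ k, Measurable (iter T S k)) (hY : Y ≤ m0) (a b : ℤ) :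
    obsField T S Y a b ≤ m0 :=
  iSup₂_le fun k _ => (MeasurableSpace.comap_mono hY).trans (hiter k).comap_le

theorem integral_avgLoss {ℓ : U → Ω → ℝ} {u : ℕ → Ω → U}
    (hu : ∀ k : ℕ, 1 ≤ k → Integrable (lossAt T S ℓ k (u k)) P) (n : ℕ) :
    ∫ ω, avgLoss T S ℓ u n ω ∂P =
      (n : ℝ)⁻¹ * ∑ k ∈ Finset.Icc 1 n, ∫ ω, lossAt T S ℓ k (u k) ω ∂P := by
  simp only [avgLoss]
  rw [integral_const_mul, integral_finsetSum]
  exact fun k hk => hu k (Finset.mem_Icc.1 hk).1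

variable [MeasurableSpace U] {ℓ : U → Ω → ℝ} (hℓ : Measurable fun p : U × Ω => ℓ p.1 p.2)
include hℓ

theorem measurable_loss_iter {k : ℤ} (hiter : Measurable (iter T S k)) :
    Measurable fun p : U × Ω => ℓ p.1 (iter T S k p.2) :=
  hℓ.comp (measurable_fst.prodMk (hiter.comp measurable_snd))

variable {Λ : Ω → ℝ} (hΛ : Integrable Λ P) (hdom : ∀ u ω, |ℓ u ω| ≤ Λ ω)
include hΛ hdom

theorem integrable_lossAt {k : ℤ} (hiter : MeasurePreserving (iter T S k) P P) {v : Ω → U}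
    (hv : Measurable v) : Integrable (lossAt T S ℓ k v) P :=
  integrable_comp_decision (f := fun u ω => ℓ u (iter T S k ω))
    (measurable_loss_iter hℓ hiter.measurable) (hiter.integrable_comp_of_integrable hΛ)
    (fun u _ => hdom u _) hv

theorem abs_integral_lossAt_le {k : ℤ} (hiter : MeasurePreserving (iter T S k) P P) {v : Ω → U}
    (hv : Measurable v) : |∫ ω, lossAt T S ℓ k v ω ∂P| ≤ ∫ ω, Λ ω ∂P := by
  calc |∫ ω, lossAt T S ℓ k v ω ∂P| ≤ ∫ ω, Λ (iter T S k ω) ∂P :=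
        (abs_integral_le_integral_abs).trans (integral_mono
          (integrable_lossAt hℓ hΛ hdom hiter hv).abs (hiter.integrable_comp_of_integrable hΛ)
          fun ω => hdom _ _)
    _ = ∫ ω, Λ ω ∂(P.map (iter T S k)) := (integral_map hiter.measurable.aemeasurable
        (by rw [hiter.map_eq]; exact hΛ.aestronglyMeasurable)).symm
    _ = ∫ ω, Λ ω ∂P := by rw [hiter.map_eq]

variable (hT : MeasurePreserving T P P) (hS : MeasurePreserving S P P) (hY : Y ≤ m0)
include hT hS hY

theorem exists_meanOptimalStrategy [Nonempty U] :
    ∃ ut : ℕ → Ω → U, MeanOptimalStrategy P T S Y ℓ ut := by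
  have hiter := measurePreserving_iter hT hS
  -- `ε = 1/(k+1)` is positive also at `k = 0`, where nothing is required.
  choose g ut hut hg hsel using fun k : ℕ =>
    exists_isEssInfFam_and_condExp_le_add (f := fun u ω => ℓ u (iter T S k ω))
      (obsField_le (fun k => (hiter k).measurable) hY 0 k)
      (measurable_loss_iter hℓ (hiter k).measurable) ((hiter k).integrable_comp_of_integrable hΛ)
      (fun u _ => hdom u _) (Nat.one_div_pos_of_nat (n := k))
  refine ⟨ut, fun k _ => hut k, fun k hk => ⟨g k, hg k, ?_⟩⟩
  filter_upwards [hsel k] with ω hω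
  refine hω.trans (add_le_add_right ?_ _)
  rw [one_div]
  exact inv_anti₀ (by exact_mod_cast hk) (by linarith)

variable [IsProbabilityMeasure P] {ut u : ℕ → Ω → U}

theorem MeanOptimalStrategy.integral_lossAt_le (hut : MeanOptimalStrategy P T S Y ℓ ut)
    (hu : Admissible T S Y u) {k : ℕ} (hk : 1 ≤ k) :
    ∫ ω, lossAt T S ℓ k (ut k) ω ∂P ≤ ∫ ω, lossAt T S ℓ k (u k) ω ∂P + (k : ℝ)⁻¹ := by
  have hiter := measurePreserving_iter hT hS
  obtain ⟨g, hg, hsel⟩ := hut.2 k hk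
  exact integral_comp_decision_le_add (f := fun u ω => ℓ u (iter T S k ω))
    (obsField_le (fun k => (hiter k).measurable) hY 0 k)
    (measurable_loss_iter hℓ (hiter k).measurable) ((hiter k).integrable_comp_of_integrable hΛ)
    (fun u _ => hdom u _) hg (hu k hk) hsel

theorem MeanOptimalStrategy.meanOptimal (hut : MeanOptimalStrategy P T S Y ℓ ut) :
    MeanOptimal P T S Y ℓ ut := by
  refine ⟨hut.1, fun u hu => ?_⟩
  have hiter := measurePreserving_iter hT hS
  have hmeas {v : ℕ → Ω → U} (hv : Admissible T S Y v) {k : ℕ} (hk : 1 ≤ k) : Measurable (v k) :=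
    (hv k hk).mono (obsField_le (fun k => (hiter k).measurable) hY 0 k) le_rfl
  have hint {v : ℕ → Ω → U} (hv : Admissible T S Y v) (k : ℕ) (hk : 1 ≤ k) :=
    integrable_lossAt hℓ hΛ hdom (hiter k) (hmeas hv hk)
  have hdiff : (fun n : ℕ => ∫ ω, avgLoss T S ℓ u n ω ∂P - ∫ ω, avgLoss T S ℓ ut n ω ∂P) =
      fun n : ℕ => (n : ℝ)⁻¹ * ∑ k ∈ Finset.Icc 1 n,
        (∫ ω, lossAt T S ℓ k (u k) ω ∂P - ∫ ω, lossAt T S ℓ k (ut k) ω ∂P) := by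
    funext n
    rw [integral_avgLoss (hint hu) n, integral_avgLoss (hint hut.1) n, ← mul_sub,
      Finset.sum_sub_distrib]
  rw [hdiff]
  refine liminf_avg_nonneg_of_neg_inv_le
    (fun k hk => by linarith [hut.integral_lossAt_le hℓ hΛ hdom hT hS hY hu hk])
    (C := 2 * ∫ ω, Λ ω ∂P) fun k hk => ?_
  have hu_le := abs_integral_lossAt_le hℓ hΛ hdom (hiter k) (hmeas hu hk)
  have hut_le := abs_integral_lossAt_le hℓ hΛ hdom (hiter k) (hmeas hut.1 hk)
  linarith [le_abs_self (∫ ω, lossAt T S ℓ k (u k) ω ∂P),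
    neg_abs_le (∫ ω, lossAt T S ℓ k (ut k) ω ∂P)]

end Dynamics

theorem statement2_general
    {Ω U : Type*} [m0 : MeasurableSpace Ω] [MeasurableSpace U] [Nonempty U]
    (P : Measure Ω) [IsProbabilityMeasure P]
    (T S : Ω → Ω) (hT : Ergodic T P) (hS : MeasurePreserving S P P)
    (ℓ : U → Ω → ℝ) (hℓ : Measurable fun p : U × Ω => ℓ p.1 p.2)
    (Λ : Ω → ℝ) (hΛ : Integrable Λ P) (hdom : ∀ u ω, |ℓ u ω| ≤ Λ ω)
    (Y : MeasurableSpace Ω) (hY : Y ≤ m0)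
    :
    (∃ ut : ℕ → Ω → U, MeanOptimalStrategy P T S Y ℓ ut) ∧
      ∀ ut : ℕ → Ω → U, MeanOptimalStrategy P T S Y ℓ ut → MeanOptimal P T S Y ℓ ut :=
  ⟨exists_meanOptimalStrategy hℓ hΛ hdom hT.toMeasurePreserving hS hY,
    fun _ hut => hut.meanOptimal hℓ hΛ hdom hT.toMeasurePreserving hS hY⟩

/-- Lemma 2.5: a mean-optimal strategy (in the `ε = 1/k` sense) exists, and
any such strategy is mean optimal. -/
theorem statement2
    {Ω U : Type*} [m0 : MeasurableSpace Ω] [MeasurableSpace U] [Nonempty U]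
    (P : Measure Ω) [IsProbabilityMeasure P]
    (T S : Ω → Ω) (hT : Ergodic T P) (hS : MeasurePreserving S P P)
    (hST : Function.LeftInverse S T) (hTS : Function.RightInverse S T)
    (ℓ : U → Ω → ℝ) (hℓ : Measurable fun p : U × Ω => ℓ p.1 p.2)
    (Λ : Ω → ℝ) (hΛ : Integrable Λ P) (hdom : ∀ u ω, |ℓ u ω| ≤ Λ ω)
    (Y : MeasurableSpace Ω) (hY : Y ≤ m0)
    :
    (∃ ut : ℕ → Ω → U, MeanOptimalStrategy P T S Y ℓ ut) ∧
      ∀ ut : ℕ → Ω → U, MeanOptimalStrategy P T S Y ℓ ut → MeanOptimal P T S Y ℓ ut :=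
  statement2_general (m0 := m0) P T S hT hS ℓ hℓ Λ hΛ hdom Y hY

end ErgodicDecisions
end
end

section
/- Suppose the decision space U is a compact metric space (with its Borel σ-field) and that the map u ↦ ℓ(u, ω) is continuous for P-almost every ω ∈ Ω. Then the loss function ℓ is equimeasurable. -/
open MeasureTheory Filter Set
open scoped ENNReal Topology symmDiff

noncomputable section

namespace ErgodicDecisions

variable {Ω U : Type*}

variable {m0 : MeasurableSpace Ω} [mU : MeasurableSpace U]

/-!
The sections `ℓ(·, ω)` are almost surely uniformly continuous on the compact space `U`, so their
moduli of continuity tend to `0` almost surely. By Egorov's theorem they do so uniformly off a set of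
measure at most `ε`, i.e. the sections are uniformly equicontinuous there. A finite `r`-net of `U`
for the corresponding `r` then gives, on that set, a finite `δ`-net of `{ℓ(u, ·) : u ∈ U}` in the
sup norm.
-/

section Modulus

variable {U X : Type*} [PseudoMetricSpace U] [PseudoMetricSpace X]

/-- The modulus of continuity of `f` at scale `r`, with the supremum taken only over pairs of
points of `s`: for a countable `s` it depends measurably on a parameter of `f`, and for a dense `s`
and continuous `f` it still controls every oscillation of `f` at scale `r`. -/
def modulusOn (s : Set U) (f : U → X) (r : ℝ) : ℝ≥0∞ :=
  ⨆ x ∈ s, ⨆ y ∈ s, ⨆ _ : dist x y < r, edist (f x) (f y)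

theorem edist_le_modulusOn_of_mem {s : Set U} {f : U → X} {r : ℝ} {x y : U} (hx : x ∈ s)
    (hy : y ∈ s) (hxy : dist x y < r) : edist (f x) (f y) ≤ modulusOn s f r :=
  le_iSup₂_of_le x hx <| le_iSup₂_of_le y hy <| le_iSup_of_le hxy le_rfl

theorem modulusOn_le {s : Set U} {f : U → X} {r : ℝ} {c : ℝ≥0∞}
    (h : ∀ x ∈ s, ∀ y ∈ s, dist x y < r → edist (f x) (f y) ≤ c) : modulusOn s f r ≤ c :=
  iSup₂_le fun x hx => iSup₂_le fun y hy => iSup_le (h x hx y hy)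

/-- Continuity carries the bound from the dense set `s ×ˢ s` to its closure. -/
theorem edist_le_modulusOn {s : Set U} {f : U → X} {r : ℝ} (hs : Dense s) (hf : Continuous f)
    {u v : U} (huv : dist u v < r) : edist (f u) (f v) ≤ modulusOn s f r := by
  have hW : IsOpen {p : U × U | dist p.1 p.2 < r} := isOpen_lt continuous_dist continuous_const
  have hclosed : IsClosed {p : U × U | edist (f p.1) (f p.2) ≤ modulusOn s f r} :=
    isClosed_le (hf.fst'.edist hf.snd') continuous_const
  refine hclosed.closure_subset_iff.2 ?_
    ((hs.prod hs).open_subset_closure_inter hW (show (u, v) ∈ _ from huv))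
  rintro p ⟨hp, hp₁, hp₂⟩
  exact edist_le_modulusOn_of_mem hp₁ hp₂ hp

theorem modulusOn_ne_top [CompactSpace U] {s : Set U} {f : U → X} (hf : Continuous f) (r : ℝ) :
    modulusOn s f r ≠ ⊤ :=
  ne_top_of_le_ne_top (isCompact_range hf).isBounded.ediam_ne_top <| modulusOn_le fun x _ y _ _ =>
    Metric.edist_le_ediam_of_mem (mem_range_self x) (mem_range_self y)

theorem tendsto_modulusOn_nhds_zero {s : Set U} {f : U → X} (hf : UniformContinuous f) :
    Tendsto (modulusOn s f) (𝓝 0) (𝓝 0) := by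
  refine ENNReal.tendsto_nhds_zero.2 fun ε hε => ?_
  obtain ⟨δ, hδ, hfδ⟩ :=
    (Metric.uniformity_basis_dist.uniformContinuous_iff uniformity_basis_edist).1 hf ε hε
  filter_upwards [Iio_mem_nhds hδ] with r hr
  exact modulusOn_le fun x _ y _ hxy => (hfδ x y (hxy.trans hr)).le

theorem measurable_modulusOn {Ω : Type*} [MeasurableSpace Ω] [MeasurableSpace X] [OpensMeasurableSpace X]
    [SecondCountableTopology X] {s : Set U} (hs : s.Countable) {ℓ : U → Ω → X}
    (hℓ : ∀ u, Measurable (ℓ u)) (r : ℝ) : Measurable fun ω => modulusOn s (ℓ · ω) r :=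
  .biSup s hs fun x _ => .biSup s hs fun y _ => .iSup fun _ => (hℓ x).edist (hℓ y)

end Modulus

theorem exists_measure_le_uniformEquicontinuous_compl {Ω U X : Type*} [MeasurableSpace Ω]
    [PseudoMetricSpace U] [CompactSpace U] [PseudoMetricSpace X] [MeasurableSpace X]
    [OpensMeasurableSpace X] [SecondCountableTopology X] {P : Measure Ω} [IsFiniteMeasure P]
    {ℓ : U → Ω → X}
    (hℓ : ∀ u, Measurable (ℓ u)) (hcont : ∀ᵐ ω ∂P, Continuous fun u => ℓ u ω) {ε : ℝ}
    (hε : 0 < ε) :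
    ∃ t, MeasurableSet t ∧ P t ≤ ENNReal.ofReal ε ∧
      UniformEquicontinuous fun (ω : ↥tᶜ) u => ℓ u ω := by
  obtain ⟨s, hsc, hsd⟩ := TopologicalSpace.exists_countable_dense U
  set w : ℕ → Ω → ℝ := fun n ω => (modulusOn s (ℓ · ω) (1 / (n + 1))).toReal
  have hw_meas : ∀ n, StronglyMeasurable (w n) := fun n =>
    (measurable_modulusOn hsc hℓ _).ennreal_toReal.stronglyMeasurable
  have hw_lim : ∀ᵐ ω ∂P, Tendsto (fun n => w n ω) atTop (𝓝 0) := by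
    filter_upwards [hcont] with ω hω
    have := (tendsto_modulusOn_nhds_zero (s := s)
      (CompactSpace.uniformContinuous_of_continuous hω)).comp tendsto_one_div_add_atTop_nhds_zero_nat
    exact (ENNReal.tendsto_toReal ENNReal.zero_ne_top).comp this
  obtain ⟨t, ht, hPt, hunif⟩ :=
    tendstoUniformlyOn_of_ae_tendsto' hw_meas stronglyMeasurable_const hw_lim hε
  set N := toMeasurable P {ω | ¬Continuous fun u => ℓ u ω}
  refine ⟨t ∪ N, ht.union (measurableSet_toMeasurable _ _), ?_, ?_⟩
  · calc P (t ∪ N) ≤ P t + P N := measure_union_le _ _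
      _ = P t := by rw [measure_toMeasurable, ae_iff.1 hcont, add_zero]
      _ ≤ ENNReal.ofReal ε := hPt
  refine Metric.uniformEquicontinuous_iff.2 fun δ hδ => ?_
  obtain ⟨n, hn⟩ := (Metric.tendstoUniformlyOn_iff.1 hunif δ hδ).exists
  refine ⟨1 / (n + 1), Nat.one_div_pos_of_nat, fun u v huv ⟨ω, hω⟩ => ?_⟩
  rw [compl_union] at hω
  have hωc : Continuous fun u => ℓ u ω := not_not.1 fun h => hω.2 (subset_toMeasurable _ _ h)
  calc dist (ℓ u ω) (ℓ v ω) = (edist (ℓ u ω) (ℓ v ω)).toReal := dist_edist _ _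
    _ ≤ w n ω := ENNReal.toReal_mono (modulusOn_ne_top hωc _) (edist_le_modulusOn hsd hωc huv)
    _ < δ := (le_abs_self _).trans_lt (by simpa using hn ω hω.1)

theorem exists_finset_forall_dist_lt_of_uniformEquicontinuous {ι U X : Type*}
    [PseudoMetricSpace U] [CompactSpace U] [PseudoMetricSpace X] {F : ι → U → X}
    (hF : UniformEquicontinuous F) {δ : ℝ} (hδ : 0 < δ) :
    ∃ c : Finset U, ∀ u, ∃ v ∈ c, ∀ i, dist (F i u) (F i v) < δ := by
  obtain ⟨r, hr, hFr⟩ := Metric.uniformEquicontinuous_iff.1 hF δ hδ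
  obtain ⟨c, -, hc, hcover⟩ := finite_cover_balls_of_compact (isCompact_univ (X := U)) hr
  refine ⟨hc.toFinset, fun u => ?_⟩
  obtain ⟨v, hv, huv⟩ := mem_iUnion₂.1 (hcover (mem_univ u))
  exact ⟨v, hc.mem_toFinset.2 hv, hFr u v huv⟩

theorem statement11_general
    {Ω U : Type*} [m0 : MeasurableSpace Ω]
    [MetricSpace U] [CompactSpace U] [MeasurableSpace U]
    (P : Measure Ω) [IsProbabilityMeasure P]
    (ℓ : U → Ω → ℝ) (hℓ : Measurable fun p : U × Ω => ℓ p.1 p.2)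
    (hcont : ∀ᵐ ω ∂P, Continuous fun u => ℓ u ω) :
    Equimeasurable P ℓ := by
  classical
  intro ε hε
  obtain ⟨t, ht, hPt, hequi⟩ := exists_measure_le_uniformEquicontinuous_compl
    (fun u => hℓ.comp measurable_prodMk_left) hcont hε
  refine ⟨tᶜ, ht.compl, ?_, fun δ hδ => ?_⟩
  · rw [prob_compl_eq_one_sub ht]
    exact tsub_le_tsub_left hPt 1
  obtain ⟨c, hc⟩ := exists_finset_forall_dist_lt_of_uniformEquicontinuous hequi hδ
  refine ⟨c.image fun v => tᶜ.indicator (ℓ v), fun u => ?_⟩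
  obtain ⟨v, hv, huv⟩ := hc u
  refine ⟨_, Finset.mem_image_of_mem _ hv, ?_⟩
  rw [eLpNorm_exponent_top]
  refine eLpNormEssSup_le_of_ae_bound (ae_of_all _ fun ω => ?_)
  rw [← Pi.sub_apply (tᶜ.indicator _), ← indicator_sub', norm_indicator_eq_indicator_norm]
  exact indicator_apply_le' (fun hω => (dist_eq_norm (ℓ u ω) _ ▸ huv ⟨ω, hω⟩).le) fun _ => hδ.le

/-- Lemma 3.5: if `U` is a compact metric space and `u ↦ ℓ(u,ω)` is
continuous for a.e. `ω`, then the loss `ℓ` is equimeasurable. -/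
theorem statement11
    {Ω U : Type*} [m0 : MeasurableSpace Ω]
    [MetricSpace U] [CompactSpace U] [MeasurableSpace U] [BorelSpace U]
    (P : Measure Ω) [IsProbabilityMeasure P]
    (ℓ : U → Ω → ℝ) (hℓ : Measurable fun p : U × Ω => ℓ p.1 p.2)
    (Λ : Ω → ℝ) (hΛ : Integrable Λ P) (hdom : ∀ u ω, |ℓ u ω| ≤ Λ ω)
    (hcont : ∀ᵐ ω ∂P, Continuous fun u => ℓ u ω) :
    Equimeasurable P ℓ :=
  statement11_general (m0 := m0) P ℓ hℓ hcont

end ErgodicDecisions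
end
end
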